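/- For a globally hyperbolic poset X, the set of maximal elements of the interval domain IX, with the relative Scott topology, is homeomorphic to X with the interval topology. -/

import Mathlib

open Set

/-- `a` is way below `x`. -/
def wayBelow {α : Type*} [Preorder α] (a x : α) : Prop :=
  ∀ S : Set α, S.Nonempty → DirectedOn (· ≤ ·) S → ∀ d, IsLUB S d → x ≤ d →
    ∃ s ∈ S, a ≤ s

/-- A poset is continuous if every element is the supremum of a directed set
of elements way below it. -/
def ContinuousPoset (α : Type*) [Preorder α] : Prop :=
  ∀ x : α, ∃ S : Set α, S ⊆ {a | wayBelow a x} ∧ S.Nonempty ∧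
    DirectedOn (· ≤ ·) S ∧ IsLUB S x

/-- A basis for a continuous poset. -/
def PosetBasis {α : Type*} [Preorder α] (B : Set α) : Prop :=
  ∀ x : α, ∃ S : Set α, S ⊆ B ∩ {a | wayBelow a x} ∧ S.Nonempty ∧
    DirectedOn (· ≤ ·) S ∧ IsLUB S x

/-- Scott open sets: upper sets inaccessible by directed suprema. -/
def ScottOpen {α : Type*} [Preorder α] (U : Set α) : Prop :=
  IsUpperSet U ∧ ∀ S : Set α, S.Nonempty → DirectedOn (· ≤ ·) S → ∀ d, IsLUB S d →
    d ∈ U → (S ∩ U).Nonempty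

/-- The Scott topology. -/
def scottTop (α : Type*) [Preorder α] : TopologicalSpace α :=
  TopologicalSpace.generateFrom {U | ScottOpen U}

/-- A bicontinuous poset. -/
def Bicontinuous (α : Type*) [Preorder α] : Prop :=
  ContinuousPoset α ∧
  (∀ x y : α, wayBelow x y ↔
    ∀ S : Set α, S.Nonempty → DirectedOn (· ≥ ·) S → ∀ i, IsGLB S i → i ≤ x →
      ∃ s ∈ S, s ≤ y) ∧
  (∀ x : α, DirectedOn (· ≥ ·) {y | wayBelow x y} ∧ IsGLB {y | wayBelow x y} x)

/-- The basic open intervals `(a,b) = {x | a ≪ x ≪ b}`. -/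
def intervalBasis (α : Type*) [Preorder α] : Set (Set α) :=
  {s | ∃ a b : α, s = {x | wayBelow a x ∧ wayBelow x b}}

/-- The interval topology, generated by the sets `(a,b)`. -/
def intervalTop (α : Type*) [Preorder α] : TopologicalSpace α :=
  TopologicalSpace.generateFrom (intervalBasis α)

/-- A globally hyperbolic poset: bicontinuous, with compact closed intervals. -/
def GloballyHyperbolic (α : Type*) [PartialOrder α] : Prop :=
  Bicontinuous α ∧ ∀ a b : α, @IsCompact α (intervalTop α) (Set.Icc a b)

/-- The poset of closed intervals `[a,b]`, `a ≤ b`, under reverse inclusion. -/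
def IX (α : Type*) [PartialOrder α] := {p : α × α // p.1 ≤ p.2}

instance IX.instPartialOrder {α : Type*} [PartialOrder α] : PartialOrder (IX α) where
  le x y := x.1.1 ≤ y.1.1 ∧ y.1.2 ≤ x.1.2
  le_refl x := ⟨le_refl _, le_refl _⟩
  le_trans x y z h1 h2 := ⟨h1.1.trans h2.1, h2.2.trans h1.2⟩
  le_antisymm x y h1 h2 :=
    Subtype.ext (Prod.ext_iff.mpr ⟨le_antisymm h1.1 h2.1, le_antisymm h2.2 h1.2⟩)

section Rel

variable {β : Type*}

/-- Directedness with respect to an arbitrary relation. -/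
def relDirectedOn (r : β → β → Prop) (S : Set β) : Prop :=
  ∀ x ∈ S, ∀ y ∈ S, ∃ z ∈ S, r x z ∧ r y z

/-- Least upper bound with respect to an arbitrary relation. -/
def relIsLUB (r : β → β → Prop) (S : Set β) (d : β) : Prop :=
  (∀ s ∈ S, r s d) ∧ ∀ u, (∀ s ∈ S, r s u) → r d u

/-- The way-below relation with respect to an arbitrary relation. -/
def relWayBelow (r : β → β → Prop) (a x : β) : Prop :=
  ∀ S : Set β, S.Nonempty → relDirectedOn r S → ∀ d, relIsLUB r S d → r x d →
    ∃ s ∈ S, r a s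

/-- An abstract basis: a transitive relation, interpolative from the `-` direction. -/
def AbstractBasis (r : β → β → Prop) : Prop :=
  Transitive r ∧ ∀ (F : Finset β) (x : β), (∀ y ∈ F, r y x) →
    ∃ z, (∀ y ∈ F, r y z) ∧ r z x

/-- Interpolation in the `+` direction. -/
def PlusInterpolative (r : β → β → Prop) : Prop :=
  ∀ (F : Finset β) (x : β), (∀ y ∈ F, r x y) → ∃ z, r x z ∧ (∀ y ∈ F, r z y)

/-- An ideal: a nonempty directed lower set. -/
def IsIdeal (r : β → β → Prop) (I : Set β) : Prop :=
  I.Nonempty ∧ (∀ x y, r x y → y ∈ I → x ∈ I) ∧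
    ∀ x ∈ I, ∀ y ∈ I, ∃ z ∈ I, r x z ∧ r y z

/-- The ideal completion: ideals ordered by inclusion. -/
def IdealCompletion (r : β → β → Prop) := {I : Set β // IsIdeal r I}

instance IdealCompletion.instPartialOrder {β : Type*} (r : β → β → Prop) :
    PartialOrder (IdealCompletion r) where
  le I J := I.1 ⊆ J.1
  le_refl I := subset_rfl
  le_trans I J K h1 h2 := Set.Subset.trans h1 h2
  le_antisymm I J h1 h2 := Subtype.ext (Set.Subset.antisymm h1 h2)

end Rel

/-- The order on maximal elements induced by interval endpoints. -/
def maxLe {α : Type*} (left right : α → α) (a b : α) : Prop :=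
  ∃ x, left x = a ∧ right x = b

/-- An interval poset. -/
structure IntervalPoset (α : Type*) [PartialOrder α] where
  left : α → α
  right : α → α
  left_max : ∀ x, IsMax (left x)
  right_max : ∀ x, IsMax (right x)
  glb : ∀ x, IsGLB {left x, right x} x
  glue : ∀ x y, right x = left y →
    ∃ z, IsGLB {x, y} z ∧ left z = left x ∧ right z = right y
  sub_left : ∀ x p, IsMax p → x ≤ p →
    ∃ z, IsGLB {left x, p} z ∧ left z = left x ∧ right z = p
  sub_right : ∀ x p, IsMax p → x ≤ p →
    ∃ z, IsGLB {p, right x} z ∧ left z = p ∧ right z = right x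

/-- An interval domain. -/
structure IntervalDomain (α : Type*) [PartialOrder α] extends IntervalPoset α where
  dcpo : ∀ S : Set α, S.Nonempty → DirectedOn (· ≤ ·) S → ∃ d, IsLUB S d
  cont : ContinuousPoset α
  ax1 : ∀ x p, IsMax p → wayBelow x p →
    (∀ z, IsGLB {left x, p} z → ∃ u, wayBelow z u) ∧
    (∀ z, IsGLB {p, right x} z → ∃ u, wayBelow z u)
  ax2b : ∀ x : α, (∃ u, wayBelow x u) ↔
    (∀ y, left y = left x → y ≤ x →
      relWayBelow (fun u v => u ≤ v ∧ right u = right y ∧ right v = right y) y (right y))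
  ax2c : ∀ x : α, (∃ u, wayBelow x u) ↔
    (∀ y, right y = right x → y ≤ x →
      relWayBelow (fun u v => u ≤ v ∧ left u = left y ∧ left v = left y) y (left y))
  ax3a : ∀ (p : α) (S : Set α), S.Nonempty → S ⊆ {z | left z = p} →
    DirectedOn (· ≤ ·) S → ∀ u, IsLUB S u →
      left u = p ∧ ∀ (q : α) (T : Set α), T.Nonempty → T ⊆ {z | left z = q} →
        DirectedOn (· ≤ ·) T → ∀ v, IsLUB T v → right '' T = right '' S →
          right u = right v
  ax3b : ∀ (q : α) (S : Set α), S.Nonempty → S ⊆ {z | right z = q} →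
    DirectedOn (· ≤ ·) S → ∀ u, IsLUB S u →
      right u = q ∧ ∀ (p : α) (T : Set α), T.Nonempty → T ⊆ {z | right z = p} →
        DirectedOn (· ≤ ·) T → ∀ v, IsLUB T v → left '' T = left '' S →
          left u = left v
  ax4 : ∀ x : α, @IsCompact α (scottTop α) ({y | x ≤ y} ∩ {y | IsMax y})

/-!
The maximal elements of `IX` are the singletons `[x,x]`, and `x ↦ [x,x]` is the candidate
homeomorphism. It is continuous because `[x,x]` is the directed supremum of the intervals `[a,b]`
with `a ≪ x ≪ b`: a Scott open set containing `[x,x]` contains one of them, and with it every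
`[y,y]` with `y ∈ (a,b)`. Its inverse is continuous because `(a,b)` is the trace on the maximal
elements of `↟[a,b] = {[c,d] | a ≪ c, d ≪ b}`. Scott openness of `↟[a,b]` uses that directed
suprema in `IX` are formed endpointwise; this needs suprema of bounded directed sets in `X`, which
exist because closed intervals are compact and `↑x`, `↓x` are closed in the interval topology.
-/

open Filter Topology

section WayBelow

variable {β : Type*} [Preorder β] {a a' x y : β}

theorem wayBelow.le (h : wayBelow a x) : a ≤ x := by
  obtain ⟨s, rfl, hs⟩ := h {x} (singleton_nonempty x) (directedOn_singleton x) x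
    isLUB_singleton le_rfl
  exact hs

theorem wayBelow.trans_le (h : wayBelow a x) (hxy : x ≤ y) : wayBelow a y :=
  fun S hS hdir d hd hyd => h S hS hdir d hd (hxy.trans hyd)

theorem LE.le.trans_wayBelow (ha : a' ≤ a) (h : wayBelow a x) : wayBelow a' x := by
  intro S hS hdir d hd hxd
  obtain ⟨s, hs, has⟩ := h S hS hdir d hd hxd
  exact ⟨s, hs, ha.trans has⟩

namespace ContinuousPoset

variable (hβ : ContinuousPoset β)
include hβ

theorem isLUB_wayBelow (x : β) : IsLUB {a | wayBelow a x} x := by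
  obtain ⟨S, hSx, -, -, hS⟩ := hβ x
  exact ⟨fun a ha => wayBelow.le ha, fun u hu => hS.2 fun s hs => hu (hSx hs)⟩

theorem directedOn_wayBelow (x : β) : DirectedOn (· ≤ ·) {a | wayBelow a x} := by
  obtain ⟨S, hSx, hne, hdir, hS⟩ := hβ x
  intro a ha b hb
  obtain ⟨s, hs, has⟩ := ha S hne hdir x hS le_rfl
  obtain ⟨t, ht, hbt⟩ := hb S hne hdir x hS le_rfl
  obtain ⟨u, hu, hsu, htu⟩ := hdir s hs t ht
  exact ⟨u, hSx hu, has.trans hsu, hbt.trans htu⟩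

theorem nonempty_wayBelow (x : β) : {a | wayBelow a x}.Nonempty := by
  obtain ⟨S, hSx, hne, -⟩ := hβ x
  exact hne.mono hSx

theorem exists_wayBelow_wayBelow (h : wayBelow a x) : ∃ c, wayBelow a c ∧ wayBelow c x := by
  set D := {d | ∃ c, wayBelow c x ∧ wayBelow d c}
  have hne : D.Nonempty := by
    obtain ⟨c, hcx⟩ := hβ.nonempty_wayBelow x
    obtain ⟨d, hdc⟩ := hβ.nonempty_wayBelow c
    exact ⟨d, c, hcx, hdc⟩
  have hdir : DirectedOn (· ≤ ·) D := by
    rintro d₁ ⟨c₁, hc₁, hd₁⟩ d₂ ⟨c₂, hc₂, hd₂⟩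
    obtain ⟨c, hcx, hc₁c, hc₂c⟩ := hβ.directedOn_wayBelow x c₁ hc₁ c₂ hc₂
    obtain ⟨d, hdc, hd₁d, hd₂d⟩ :=
      hβ.directedOn_wayBelow c d₁ (hd₁.trans_le hc₁c) d₂ (hd₂.trans_le hc₂c)
    exact ⟨d, ⟨c, hcx, hdc⟩, hd₁d, hd₂d⟩
  have hlub : IsLUB D x := by
    refine ⟨fun d ⟨c, hcx, hdc⟩ => hdc.le.trans hcx.le, fun u hu => ?_⟩
    exact (hβ.isLUB_wayBelow x).2 fun c hcx =>
      (hβ.isLUB_wayBelow c).2 fun d hdc => hu ⟨c, hcx, hdc⟩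
  obtain ⟨d, ⟨c, hcx, hdc⟩, had⟩ := h D hne hdir x hlub le_rfl
  exact ⟨c, had.trans_wayBelow hdc, hcx⟩

end ContinuousPoset

theorem Bicontinuous.nonempty_wayAbove (hb : Bicontinuous β) (x : β) :
    {y | wayBelow x y}.Nonempty := by
  by_contra hempty
  rw [not_nonempty_iff_eq_empty] at hempty
  have htop : IsTop x := isGLB_empty_iff.1 (hempty ▸ (hb.2.2 x).2)
  have hxx : wayBelow x x :=
    (hb.2.1 x x).2 fun S hS _ _ _ _ => ⟨hS.some, hS.some_mem, htop _⟩
  exact hempty.subset hxx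

end WayBelow

section IntervalTopology

variable {α : Type*} [Preorder α]

theorem isOpen_intervalTop_of_forall {U : Set α}
    (h : ∀ x ∈ U, ∃ a b, wayBelow a x ∧ wayBelow x b ∧ {y | wayBelow a y ∧ wayBelow y b} ⊆ U) :
    IsOpen[intervalTop α] U := by
  let := intervalTop α
  refine isOpen_iff_forall_mem_open.2 fun x hx => ?_
  obtain ⟨a, b, hax, hxb, hU⟩ := h x hx
  exact ⟨_, hU, TopologicalSpace.GenerateOpen.basic _ ⟨a, b, rfl⟩, hax, hxb⟩

theorem Bicontinuous.closedIciTopology (hb : Bicontinuous α) :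
    @ClosedIciTopology α (intervalTop α) _ := by
  let := intervalTop α
  refine ⟨fun c => isOpen_compl_iff.1 (isOpen_intervalTop_of_forall fun z hz => ?_)⟩
  obtain ⟨b, hzb, hcb⟩ : ∃ b, wayBelow z b ∧ ¬ c ≤ b := by
    by_contra! hcon
    exact hz ((hb.2.2 z).2.2 hcon)
  obtain ⟨a, haz⟩ := hb.1.nonempty_wayBelow z
  exact ⟨a, b, haz, hzb, fun y hy hcy => hcb (le_trans hcy hy.2.le)⟩

theorem Bicontinuous.closedIicTopology (hb : Bicontinuous α) :
    @ClosedIicTopology α (intervalTop α) _ := by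
  let := intervalTop α
  refine ⟨fun c => isOpen_compl_iff.1 (isOpen_intervalTop_of_forall fun z hz => ?_)⟩
  obtain ⟨a, haz, hac⟩ : ∃ a, wayBelow a z ∧ ¬ a ≤ c := by
    by_contra! hcon
    exact hz ((hb.1.isLUB_wayBelow z).2 hcon)
  obtain ⟨b, hzb⟩ := hb.nonempty_wayAbove z
  exact ⟨a, b, haz, hzb, fun y hy hyc => hac (le_trans hy.1.le hyc)⟩

end IntervalTopology

section CompactIntervals

variable {α : Type*} [Preorder α] [TopologicalSpace α] [ClosedIciTopology α]
  [ClosedIicTopology α] (hIcc : ∀ a b : α, IsCompact (Icc a b))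
include hIcc

/-- The supremum is a cluster point of the net `L` itself. -/
theorem DirectedOn.exists_isLUB_of_bddAbove {L : Set α} (hdir : DirectedOn (· ≤ ·) L)
    (hne : L.Nonempty) (hbdd : BddAbove L) : ∃ x, IsLUB L x := by
  obtain ⟨s₀, hs₀⟩ := hne
  obtain ⟨b, hb⟩ := hbdd
  have : Nonempty L := ⟨⟨s₀, hs₀⟩⟩
  have : IsDirectedOrder L := hdir.isDirectedOrder
  have hle : map Subtype.val (atTop : Filter L) ≤ 𝓟 (Icc s₀ b) := by
    rw [le_principal_iff, mem_map]
    filter_upwards [eventually_ge_atTop ⟨s₀, hs₀⟩] with t ht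
    exact show (t : α) ∈ Icc s₀ b from ⟨ht, hb t.2⟩
  obtain ⟨x, -, hx⟩ := hIcc s₀ b hle
  refine ⟨x, fun s hs => ?_, fun u hu => ?_⟩
  · exact isClosed_Ici.mem_of_mapClusterPt hx (eventually_ge_atTop (⟨s, hs⟩ : L))
  · exact isClosed_Iic.mem_of_mapClusterPt hx (Eventually.of_forall fun t => hu t.2)

theorem DirectedOn.exists_isGLB_of_bddBelow {R : Set α} (hdir : DirectedOn (· ≥ ·) R)
    (hne : R.Nonempty) (hbdd : BddBelow R) : ∃ y, IsGLB R y :=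
  DirectedOn.exists_isLUB_of_bddAbove (α := αᵒᵈ)
    (fun a b => by
      rw [← OrderDual.toDual_ofDual a, ← OrderDual.toDual_ofDual b, Icc_toDual]
      exact hIcc _ _)
    hdir hne hbdd

end CompactIntervals

section IntervalDomain

variable {α : Type*} [PartialOrder α]

def IX.singleton (x : α) : IX α := ⟨(x, x), le_rfl⟩

theorem IX.isMax_iff {m : IX α} : IsMax m ↔ m.1.1 = m.1.2 := by
  refine ⟨fun hm => le_antisymm m.2 (hm (b := IX.singleton m.1.1) ⟨le_rfl, m.2⟩).2,
    fun heq n hmn => ⟨n.2.trans (hmn.2.trans heq.ge), (heq ▸ hmn.1).trans n.2⟩⟩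

theorem IX.isMax_singleton (x : α) : IsMax (IX.singleton x) := IX.isMax_iff.2 rfl

def IX.maxEquiv : {m : IX α // IsMax m} ≃ α where
  toFun m := m.1.1.1
  invFun x := ⟨IX.singleton x, IX.isMax_singleton x⟩
  left_inv m := Subtype.ext <| Subtype.ext <| Prod.ext rfl (IX.isMax_iff.1 m.2)
  right_inv _ := rfl

section Endpoints

variable {L R : Set α} (hLR : ∀ l ∈ L, ∀ r ∈ R, l ≤ r)
include hLR

theorem IX.nonempty_setOf_fst_snd (hL : L.Nonempty) (hR : R.Nonempty) :
    {p : IX α | p.1.1 ∈ L ∧ p.1.2 ∈ R}.Nonempty :=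
  let ⟨l, hl⟩ := hL
  let ⟨r, hr⟩ := hR
  ⟨⟨(l, r), hLR l hl r hr⟩, hl, hr⟩

theorem IX.directedOn_setOf_fst_snd (hL : DirectedOn (· ≤ ·) L) (hR : DirectedOn (· ≥ ·) R) :
    DirectedOn (· ≤ ·) {p : IX α | p.1.1 ∈ L ∧ p.1.2 ∈ R} := by
  rintro p ⟨hpL, hpR⟩ q ⟨hqL, hqR⟩
  obtain ⟨l, hl, hpl, hql⟩ := hL _ hpL _ hqL
  obtain ⟨r, hr, hpr, hqr⟩ := hR _ hpR _ hqR
  exact ⟨⟨(l, r), hLR l hl r hr⟩, ⟨hl, hr⟩, ⟨hpl, hpr⟩, ⟨hql, hqr⟩⟩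

theorem IX.isLUB_setOf_fst_snd {x y : α} (hxy : x ≤ y) (hL : IsLUB L x) (hR : IsGLB R y)
    (hLne : L.Nonempty) (hRne : R.Nonempty) :
    IsLUB {p : IX α | p.1.1 ∈ L ∧ p.1.2 ∈ R} ⟨(x, y), hxy⟩ := by
  refine ⟨fun p hp => ⟨hL.1 hp.1, hR.1 hp.2⟩,
    fun q hq => ⟨hL.2 fun l hl => ?_, hR.2 fun r hr => ?_⟩⟩
  · obtain ⟨r, hr⟩ := hRne
    exact (hq (a := ⟨(l, r), hLR l hl r hr⟩) ⟨hl, hr⟩).1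
  · obtain ⟨l, hl⟩ := hLne
    exact (hq (a := ⟨(l, r), hLR l hl r hr⟩) ⟨hl, hr⟩).2

end Endpoints

theorem IX.isLUB_fst_isGLB_snd [TopologicalSpace α] [ClosedIciTopology α] [ClosedIicTopology α]
    (hIcc : ∀ a b : α, IsCompact (Icc a b)) {S : Set (IX α)} (hne : S.Nonempty)
    (hdir : DirectedOn (· ≤ ·) S) {m : IX α} (hm : IsLUB S m) :
    IsLUB ((fun s : IX α => s.1.1) '' S) m.1.1 ∧ IsGLB ((fun s : IX α => s.1.2) '' S) m.1.2 := by
  obtain ⟨x, hx⟩ := (hdir.mono_comp fun _ _ h => h.1).exists_isLUB_of_bddAbove hIcc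
    (hne.image _) ⟨m.1.1, forall_mem_image.2 fun s hs => (hm.1 hs).1⟩
  obtain ⟨y, hy⟩ := (hdir.mono_comp (rb := (· ≥ ·)) fun _ _ h => h.2).exists_isGLB_of_bddBelow
    hIcc (hne.image _) ⟨m.1.2, forall_mem_image.2 fun s hs => (hm.1 hs).2⟩
  have hxy : x ≤ y := hy.2 <| forall_mem_image.2 fun t ht => hx.2 <| forall_mem_image.2
    fun s hs => by
      obtain ⟨u, -, hsu, htu⟩ := hdir s hs t ht
      exact hsu.1.trans (u.2.trans htu.2)
  have hmxy : m ≤ ⟨(x, y), hxy⟩ :=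
    hm.2 fun s hs => ⟨hx.1 (mem_image_of_mem _ hs), hy.1 (mem_image_of_mem _ hs)⟩
  have hxm : x = m.1.1 := le_antisymm (hx.2 <| forall_mem_image.2 fun s hs => (hm.1 hs).1) hmxy.1
  have hym : y = m.1.2 := le_antisymm hmxy.2 (hy.2 <| forall_mem_image.2 fun s hs => (hm.1 hs).2)
  exact ⟨hxm ▸ hx, hym ▸ hy⟩

theorem GloballyHyperbolic.scottOpen_setOf_wayBelow (h : GloballyHyperbolic α) (a b : α) :
    ScottOpen {m : IX α | wayBelow a m.1.1 ∧ wayBelow m.1.2 b} := by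
  let := intervalTop α
  have := h.1.closedIciTopology
  have := h.1.closedIicTopology
  refine ⟨fun m n hmn ⟨ham, hmb⟩ => ⟨ham.trans_le hmn.1, hmn.2.trans_wayBelow hmb⟩,
    fun S hS hdir m hm ⟨ham, hmb⟩ => ?_⟩
  obtain ⟨hL, hR⟩ := IX.isLUB_fst_isGLB_snd h.2 hS hdir hm
  obtain ⟨a₁, haa₁, ha₁m⟩ := h.1.1.exists_wayBelow_wayBelow ham
  obtain ⟨b₁, hmb₁, hb₁b⟩ := h.1.1.exists_wayBelow_wayBelow hmb
  obtain ⟨_, ⟨s, hs, rfl⟩, ha₁s⟩ :=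
    ha₁m _ (hS.image _) (hdir.mono_comp fun _ _ h => h.1) _ hL le_rfl
  obtain ⟨_, ⟨t, ht, rfl⟩, htb₁⟩ := (h.1.2.1 _ _).1 hmb₁ _ (hS.image _)
    (hdir.mono_comp (rb := (· ≥ ·)) fun _ _ h => h.2) _ hR le_rfl
  obtain ⟨u, hu, hsu, htu⟩ := hdir s hs t ht
  exact ⟨u, hu, haa₁.trans_le (ha₁s.trans hsu.1), (htu.2.trans htb₁).trans_wayBelow hb₁b⟩

theorem GloballyHyperbolic.continuous_maxEquiv (h : GloballyHyperbolic α) :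
    Continuous[(scottTop (IX α)).induced Subtype.val, intervalTop α] (IX.maxEquiv (α := α)) := by
  let := scottTop (IX α)
  refine continuous_generateFrom_iff.2 ?_
  rintro _ ⟨a, b, rfl⟩
  refine isOpen_induced_iff.2
    ⟨_, TopologicalSpace.GenerateOpen.basic _ (h.scottOpen_setOf_wayBelow a b), ?_⟩
  ext ⟨m, hm⟩
  change _ ∧ _ ↔ wayBelow a m.1.1 ∧ wayBelow m.1.1 b
  rw [IX.isMax_iff.1 hm]

theorem Bicontinuous.continuous_IX_singleton (hb : Bicontinuous α) :
    Continuous[intervalTop α, scottTop (IX α)] (IX.singleton (α := α)) := by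
  refine continuous_generateFrom_iff.2 fun U (hU : ScottOpen U) =>
    isOpen_intervalTop_of_forall fun x hx => ?_
  have hLR : ∀ l ∈ {a | wayBelow a x}, ∀ r ∈ {b | wayBelow x b}, l ≤ r :=
    fun l hl r hr => hl.le.trans hr.le
  obtain ⟨p, ⟨hpx, hxp⟩, hpU⟩ := hU.2 _
    (IX.nonempty_setOf_fst_snd hLR (hb.1.nonempty_wayBelow x) (hb.nonempty_wayAbove x))
    (IX.directedOn_setOf_fst_snd hLR (hb.1.directedOn_wayBelow x) (hb.2.2 x).1) _
    (IX.isLUB_setOf_fst_snd hLR le_rfl (hb.1.isLUB_wayBelow x) (hb.2.2 x).2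
      (hb.1.nonempty_wayBelow x) (hb.nonempty_wayAbove x)) hx
  exact ⟨p.1.1, p.1.2, hpx, hxp,
    fun y hy => hU.1 (show p ≤ IX.singleton y from ⟨hy.1.le, hy.2.le⟩) hpU⟩

end IntervalDomain

/-- the maximal elements of `IX` with the relative Scott topology are
homeomorphic to `X` with the interval topology. -/
theorem max_IX_homeomorphic {α : Type*} [PartialOrder α]
    (h : GloballyHyperbolic α) :
    letI : TopologicalSpace (IX α) := scottTop (IX α)
    letI : TopologicalSpace α := intervalTop α
    Nonempty ({m : IX α // IsMax m} ≃ₜ α) :=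
  letI : TopologicalSpace (IX α) := scottTop (IX α)
  letI : TopologicalSpace α := intervalTop α
  ⟨{ IX.maxEquiv with
      continuous_toFun := h.continuous_maxEquiv
      continuous_invFun := h.1.continuous_IX_singleton.subtype_mk _ }⟩
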